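/- Let n ≥ 1 be an integer, a, β ∈ ℝ, z ∈ ℝ^{2n} and w ∈ ℝ with (z,w) ≠ (0,0). Let J be the 2n×2n real matrix [[0, Iₙ],[−Iₙ, 0]] and let M(z,w) = |z|²·I_{2n} + a·w·J + 2·z·zᵀ − (β+4)·(|z|⁴/(|z|⁴+w²))·z·zᵀ. Then det M(z,w) = ((|z|⁴ + a²w²)^{n−1}/(|z|⁴ + w²))·(−(β+1)|z|⁸ + (a²+3)|z|⁴w² + a²w⁴). (Equation (3.13) in the proof of Lemma 3.7.) -/

import Mathlib

noncomputable section

/-- The standard symplectic matrix `J = [[0, Iₙ], [−Iₙ, 0]]` as a `2n × 2n` real matrix,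
indexed by `Fin n ⊕ Fin n`. -/
def Jmat (n : ℕ) : Matrix (Fin n ⊕ Fin n) (Fin n ⊕ Fin n) ℝ :=
  Matrix.fromBlocks 0 1 (-1) 0

/-- The matrix `M(z,w) = |z|²·I + a·w·J + 2·z·zᵀ − (β+4)(|z|⁴/(|z|⁴+w²))·z·zᵀ`. -/
def Mmat (n : ℕ) (a β : ℝ) (z : Fin n ⊕ Fin n → ℝ) (w : ℝ) :
    Matrix (Fin n ⊕ Fin n) (Fin n ⊕ Fin n) ℝ :=
  (∑ i, z i ^ 2) • (1 : Matrix (Fin n ⊕ Fin n) (Fin n ⊕ Fin n) ℝ)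
    + (a * w) • Jmat n + (2 : ℝ) • Matrix.vecMulVec z z
    - ((β + 4) * ((∑ i, z i ^ 2) ^ 2 / ((∑ i, z i ^ 2) ^ 2 + w ^ 2))) • Matrix.vecMulVec z z

/-!
`M(z,w)` is the rank-one perturbation `A + c • z zᵀ` of `A = |z|² • 1 + a w • J`, with
`c = 2 − (β+4)|z|⁴/(|z|⁴+w²)`. Since `J² = −1`, `A (|z|² • 1 − a w • J) = (|z|⁴ + a²w²) • 1`;
with `det A = (|z|⁴ + a²w²)ⁿ` and `zᵀ J z = 0` (`J` is skew), the matrix determinant lemma gives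
`det M = (|z|⁴ + a²w²)ⁿ⁻¹ (|z|⁴ + a²w² + c |z|⁴)`, which rearranges to the claim.
-/

open Matrix

lemma det_add_vecMulVec {m R : Type*} [Fintype m] [DecidableEq m] [CommRing R]
    {A : Matrix m m R} (hA : IsUnit A.det) (u v : m → R) :
    (A + vecMulVec u v).det = A.det * (1 + v ⬝ᵥ A⁻¹ *ᵥ u) := by
  rw [vecMulVec_eq Unit, det_add_replicateCol_mul_replicateRow hA, det_unique (1 + _),
    Matrix.mul_assoc, ← replicateCol_mulVec]
  rfl

section Jmat

variable {n : ℕ}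

lemma Jmat_eq_neg_J : Jmat n = -Matrix.J (Fin n) ℝ := by
  simp [Jmat, Matrix.J, fromBlocks_neg]

lemma Jmat_mul_self : Jmat n * Jmat n = -1 := by
  rw [Jmat_eq_neg_J, neg_mul_neg, J_squared]

lemma Jmat_transpose : (Jmat n)ᵀ = -Jmat n := by
  rw [Jmat_eq_neg_J, transpose_neg, J_transpose]

lemma det_Jmat : (Jmat n).det = 1 := by
  have : Jmat n = fromBlocks 1 1 (-1) 0 * fromBlocks 1 0 (-1) 1 := by
    simp [Jmat, fromBlocks_multiply]
  rw [this, det_mul, det_fromBlocks_one₁₁, det_fromBlocks_zero₁₂]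
  simp

lemma dotProduct_Jmat_mulVec_self (z : Fin n ⊕ Fin n → ℝ) : z ⬝ᵥ (Jmat n *ᵥ z) = 0 := by
  have h : z ⬝ᵥ (Jmat n *ᵥ z) = -(z ⬝ᵥ (Jmat n *ᵥ z)) := by
    conv_lhs => rw [dotProduct_mulVec, ← mulVec_transpose, dotProduct_comm]
    rw [Jmat_transpose, neg_mulVec, dotProduct_neg]
  linarith

lemma det_one_add_smul_Jmat (r : ℝ) : (1 + r • Jmat n).det = (1 + r ^ 2) ^ n := by
  have : 1 + r • Jmat n = fromBlocks 1 (r • 1) (-(r • 1)) 1 := by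
    simp [Jmat, ← fromBlocks_one, fromBlocks_smul, fromBlocks_add]
  have hschur : (1 : Matrix (Fin n) (Fin n) ℝ) - -(r • 1) * (r • 1) = (1 + r ^ 2) • 1 := by
    rw [neg_mul, sub_neg_eq_add, smul_mul_smul_comm, mul_one, add_smul, one_smul, sq]
  rw [this, det_fromBlocks_one₁₁, hschur, det_smul, det_one, Fintype.card_fin, mul_one]

lemma det_smul_one_add_smul_Jmat (p q : ℝ) :
    (p • (1 : Matrix (Fin n ⊕ Fin n) (Fin n ⊕ Fin n) ℝ) + q • Jmat n).det
      = (p ^ 2 + q ^ 2) ^ n := by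
  rcases eq_or_ne p 0 with rfl | hp
  · simp [det_Jmat, pow_mul, ← two_mul]
  have : p • 1 + q • Jmat n = p • (1 + (q / p) • Jmat n) := by
    rw [smul_add, smul_smul, mul_div_cancel₀ q hp]
  rw [this, det_smul, det_one_add_smul_Jmat, Fintype.card_sum, Fintype.card_fin, ← two_mul,
    pow_mul, ← mul_pow]
  congr 1
  field_simp

lemma smul_one_add_smul_Jmat_mul (p q : ℝ) :
    (p • (1 : Matrix (Fin n ⊕ Fin n) (Fin n ⊕ Fin n) ℝ) + q • Jmat n) * (p • 1 - q • Jmat n)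
      = (p ^ 2 + q ^ 2) • 1 := by
  simp only [Matrix.add_mul, Matrix.mul_sub, Matrix.smul_mul, Matrix.mul_smul, Matrix.one_mul,
    Matrix.mul_one, Jmat_mul_self]
  module

lemma inv_smul_one_add_smul_Jmat {p q : ℝ} (h : p ^ 2 + q ^ 2 ≠ 0) :
    (p • (1 : Matrix (Fin n ⊕ Fin n) (Fin n ⊕ Fin n) ℝ) + q • Jmat n)⁻¹
      = (p ^ 2 + q ^ 2)⁻¹ • (p • 1 - q • Jmat n) := by
  refine inv_eq_right_inv ?_
  rw [Matrix.mul_smul, smul_one_add_smul_Jmat_mul, smul_smul, inv_mul_cancel₀ h, one_smul]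

lemma det_smul_one_add_smul_Jmat_add_smul_vecMulVec {p q : ℝ} (h : p ^ 2 + q ^ 2 ≠ 0)
    (c : ℝ) (z : Fin n ⊕ Fin n → ℝ) :
    (p • 1 + q • Jmat n + c • vecMulVec z z).det
      = (p ^ 2 + q ^ 2) ^ n * (1 + c * p * (z ⬝ᵥ z) / (p ^ 2 + q ^ 2)) := by
  have hunit : IsUnit (p • 1 + q • Jmat n).det := by
    rw [det_smul_one_add_smul_Jmat]
    exact (pow_ne_zero n h).isUnit
  rw [← smul_vecMulVec, det_add_vecMulVec hunit, det_smul_one_add_smul_Jmat,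
    inv_smul_one_add_smul_Jmat h]
  simp only [mulVec_smul, smul_mulVec, sub_mulVec, one_mulVec, dotProduct_smul, dotProduct_sub,
    dotProduct_Jmat_mulVec_self, smul_eq_mul]
  ring

end Jmat

lemma Mmat_eq (n : ℕ) (a β : ℝ) (z : Fin n ⊕ Fin n → ℝ) (w : ℝ) :
    Mmat n a β z w = (∑ i, z i ^ 2) • 1 + (a * w) • Jmat n
      + (2 - (β + 4) * ((∑ i, z i ^ 2) ^ 2 / ((∑ i, z i ^ 2) ^ 2 + w ^ 2))) • vecMulVec z z := by
  rw [Mmat, sub_smul, add_sub_assoc]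

theorem det_Mmat_general (n : ℕ) (hn : 1 ≤ n) (a β : ℝ) (z : Fin n ⊕ Fin n → ℝ) (w : ℝ) :
    (Mmat n a β z w).det
      = ((∑ i, z i ^ 2) ^ 2 + a ^ 2 * w ^ 2) ^ (n - 1) / ((∑ i, z i ^ 2) ^ 2 + w ^ 2)
          * (-(β + 1) * (∑ i, z i ^ 2) ^ 4 + (a ^ 2 + 3) * (∑ i, z i ^ 2) ^ 2 * w ^ 2
              + a ^ 2 * w ^ 4) := by
  obtain ⟨m, rfl⟩ := Nat.exists_eq_add_of_le' hn
  rw [Mmat_eq, Nat.add_sub_cancel]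
  rcases eq_or_ne z 0 with rfl | hz
  · simp only [Pi.zero_apply, zero_pow two_ne_zero, Finset.sum_const_zero, vecMulVec_zero,
      smul_zero, add_zero, det_smul_one_add_smul_Jmat]
    rcases eq_or_ne w 0 with rfl | hw
    · -- both sides vanish, the right one through division by zero
      simp
    · field_simp
      ring
  · have hzz : z ⬝ᵥ z = ∑ i, z i ^ 2 := by simp only [dotProduct, sq]
    have hs : ∑ i, z i ^ 2 ≠ 0 := hzz ▸ mt dotProduct_self_eq_zero.mp hz
    generalize ∑ i, z i ^ 2 = s at hs hzz ⊢
    rw [det_smul_one_add_smul_Jmat_add_smul_vecMulVec (by positivity), hzz]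
    field_simp
    ring

/-- Equation (3.13): for `(z,w) ≠ (0,0)`,
`det M(z,w) = ((|z|⁴+a²w²)^{n−1}/(|z|⁴+w²))·(−(β+1)|z|⁸ + (a²+3)|z|⁴w² + a²w⁴)`. -/
theorem det_Mmat (n : ℕ) (hn : 1 ≤ n) (a β : ℝ) (z : Fin n ⊕ Fin n → ℝ) (w : ℝ)
    (hzw : z ≠ 0 ∨ w ≠ 0) :
    (Mmat n a β z w).det
      = ((∑ i, z i ^ 2) ^ 2 + a ^ 2 * w ^ 2) ^ (n - 1) / ((∑ i, z i ^ 2) ^ 2 + w ^ 2)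
          * (-(β + 1) * (∑ i, z i ^ 2) ^ 4 + (a ^ 2 + 3) * (∑ i, z i ^ 2) ^ 2 * w ^ 2
              + a ^ 2 * w ^ 4) :=
  det_Mmat_general n hn a β z w
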